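/- Let $H$ be a Banach space and let $U : [-\bar\tau, \infty) \to H$ be a continuous solution of the Duhamel identity $U(t) = S(t)U_0 + \int_0^t S(t-s) k(s) B U(s - \tau(s)) ds$ for all $t \ge 0$, with $U = f$ on $[-\bar\tau, 0]$, $U_0 = f(0)$. Assume $\|S(t)\| \le M e^{-\omega t}$, $B$ bounded linear, $\tau(t) \in [0,\bar\tau]$ continuous, $\int_{t-\bar\tau}^t |k(s)| ds \le K$ for all $t \ge 0$, and $M \|B\| e^{\omega \bar\tau} \int_0^t |k(s)| ds \le \gamma + \omega' t$ for all $t \ge 0$, with $\gamma \ge 0$, $0 \le \omega' < \omega$. Then $\|U(t)\| \le M e^{\gamma} \left( \|U_0\| + e^{\omega \bar\tau} K \|B\| \max_{s \in [-\bar\tau, 0]} \{ e^{\omega s} \|f(s)\| \} \right) e^{-(\omega - \omega') t}$ for all $t \ge 0$. -/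

import Mathlib

/-!
With `w t = exp (ω t) ‖U t‖`, the Duhamel formula and `‖S t‖ ≤ M exp (-ω t)` give
`w T ≤ M ‖f 0‖ + ∫₀ᵀ β s w (s - τ s) ds` for `β = M ‖B‖ exp (ω τb) |k|`, the factor
`exp (ω τb)` absorbing the delay. The delayed time `s - τ s` lies in the history interval
`[-τb, 0]`, where `w ≤ Φ := sup exp (ω s) ‖f s‖`, only when `s ≤ τb`, which costs at most
`Φ ∫₀^τb β ≤ M ‖B‖ exp (ω τb) K Φ`. A Gronwall argument then yields
`w t ≤ (M ‖f 0‖ + M ‖B‖ exp (ω τb) K Φ) exp (∫₀ᵗ β)`, and the growth condition on `∫₀ᵗ β`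
turns this into exponential decay.

Gronwall is proved by comparing `w` with the barriers `b exp (∫₀ˢ β)`, `b` above that constant,
at the first crossing time. As `β` is only locally integrable, this rests on
`∫₀ᵀ β exp (∫₀ˢ β) = exp (∫₀ᵀ β) - 1`, the fundamental theorem of calculus for the absolutely
continuous function `exp (∫₀ˢ β)`.
-/

open Real Set MeasureTheory Filter Topology
open scoped NNReal

theorem LipschitzOnWith.comp_absolutelyContinuousOnInterval {X Y : Type*} [PseudoMetricSpace X]
    [PseudoMetricSpace Y] {g : X → Y} {K : ℝ≥0} {s : Set X} {f : ℝ → X} {a b : ℝ}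
    (hg : LipschitzOnWith K g s) (hf : AbsolutelyContinuousOnInterval f a b)
    (hfs : MapsTo f (uIcc a b) s) : AbsolutelyContinuousOnInterval (g ∘ f) a b := by
  have hK := Tendsto.const_mul (K : ℝ) hf
  rw [mul_zero] at hK
  refine squeeze_zero' (Eventually.of_forall fun E ↦ Finset.sum_nonneg fun i _ ↦ dist_nonneg)
    (eventually_inf_principal.2 (Eventually.of_forall fun E hE ↦ ?_)) hK
  rw [Finset.mul_sum]
  exact Finset.sum_le_sum fun i hi ↦ hg.dist_le_mul _ (hfs (hE.1 i hi).1) _ (hfs (hE.1 i hi).2)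

theorem integral_mul_exp_primitive {β : ℝ → ℝ} {a b : ℝ}
    (hβ : IntervalIntegrable β volume a b) :
    ∫ x in a..b, β x * exp (∫ t in a..x, β t) = exp (∫ t in a..b, β t) - 1 := by
  set Λ : ℝ → ℝ := fun x ↦ ∫ t in a..x, β t
  have hΛ : AbsolutelyContinuousOnInterval Λ a b :=
    hβ.absolutelyContinuousOnInterval_intervalIntegral left_mem_uIcc
  obtain ⟨C, hC⟩ := hΛ.exists_bound
  obtain ⟨L, hL⟩ := (contDiff_exp.contDiffOn (s := Icc (-C) C)).exists_lipschitzOnWith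
    one_ne_zero (convex_Icc _ _) isCompact_Icc
  have hexpΛ : AbsolutelyContinuousOnInterval (exp ∘ Λ) a b :=
    hL.comp_absolutelyContinuousOnInterval hΛ fun x hx ↦ abs_le.1 (hC x hx)
  have hderiv : ∀ᵐ x, x ∈ uIoc a b → deriv (exp ∘ Λ) x = β x * exp (Λ x) := by
    filter_upwards [hβ.ae_hasDerivAt_integral] with x hx hxab
    rw [mul_comm]
    exact (hx (uIoc_subset_uIcc hxab) a left_mem_uIcc).exp.deriv
  rw [← intervalIntegral.integral_congr_ae hderiv, hexpΛ.integral_deriv_eq_sub]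
  simp [Λ]

theorem exists_first_le_of_le {f g : ℝ → ℝ} {x y : ℝ} (hxy : x ≤ y)
    (hf : ContinuousOn f (Icc x y)) (hg : ContinuousOn g (Icc x y)) (hy : f y ≤ g y) :
    ∃ z ∈ Icc x y, f z ≤ g z ∧ ∀ w ∈ Ico x z, g w < f w := by
  set E := {z ∈ Icc x y | f z ≤ g z}
  have hE : IsClosed E := isClosed_Icc.isClosed_le hf hg
  have hEne : E.Nonempty := ⟨y, ⟨hxy, le_rfl⟩, hy⟩
  have hEbdd : BddBelow E := ⟨x, fun z hz ↦ hz.1.1⟩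
  obtain ⟨hzxy, hz⟩ := hE.csInf_mem hEne hEbdd
  refine ⟨sInf E, hzxy, hz, fun w hw ↦ lt_of_not_ge fun hfg ↦ ?_⟩
  exact hw.2.not_ge (csInf_le hEbdd ⟨⟨hw.1, hw.2.le.trans hzxy.2⟩, hfg⟩)

theorem le_mul_exp_integral_of_barrier {β v : ℝ → ℝ} {a t : ℝ} (ht : 0 ≤ t)
    (hβ : IntervalIntegrable β volume 0 t) (hv : ContinuousOn v (Icc 0 t))
    (h : ∀ T ∈ Icc 0 t, ∀ b, a < b → (∀ s ∈ Ico 0 T, v s < b * exp (∫ u in 0..s, β u)) →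
      v T ≤ a + ∫ s in 0..T, β s * (b * exp (∫ u in 0..s, β u))) :
    v t ≤ a * exp (∫ u in 0..t, β u) := by
  by_contra! hlt
  set b := v t * exp (-∫ u in 0..t, β u)
  have hbt : b * exp (∫ u in 0..t, β u) = v t := by simp [b, mul_assoc, ← exp_add]
  have hab : a < b := lt_of_mul_lt_mul_right (hbt ▸ hlt) (exp_pos _).le
  have hbarrier : ContinuousOn (fun s ↦ b * exp (∫ u in 0..s, β u)) (Icc 0 t) := by
    have := intervalIntegral.continuousOn_primitive_interval' hβ left_mem_uIcc
    rw [uIcc_of_le ht] at this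
    exact continuousOn_const.mul (continuous_exp.comp_continuousOn this)
  obtain ⟨T, hT, hbT, hbelow⟩ := exists_first_le_of_le ht hbarrier hv hbt.le
  have hβT : IntervalIntegrable β volume 0 T := hβ.mono_set (by
    rw [uIcc_of_le ht, uIcc_of_le hT.1]; exact Icc_subset_Icc_right hT.2)
  have := h T hT b hab hbelow
  simp_rw [mul_left_comm (β _) b] at this
  rw [intervalIntegral.integral_const_mul, integral_mul_exp_primitive hβT] at this
  linarith

theorem integral_mul_le_of_le_max {β u v : ℝ → ℝ} {τb T κ Φ : ℝ} (hT : 0 ≤ T) (hτb : 0 ≤ τb)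
    (hβ : ∀ x y, IntervalIntegrable β volume x y) (hβ0 : ∀ s, 0 ≤ β s)
    (hκ : ∫ s in 0..τb, β s ≤ κ) (hΦ : 0 ≤ Φ) (hv0 : ∀ s, 0 ≤ v s)
    (hu : IntervalIntegrable (fun s ↦ β s * u s) volume 0 T)
    (hv : ∀ x y, IntervalIntegrable (fun s ↦ β s * v s) volume x y)
    (hu_le : ∀ s ∈ Ioo 0 T, u s ≤ max Φ (v s)) (hu_late : ∀ s ∈ Ioo τb T, u s ≤ v s) :
    ∫ s in 0..T, β s * u s ≤ κ * Φ + ∫ s in 0..T, β s * v s := by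
  set m := min T τb
  have hm : m ∈ Icc 0 T := ⟨le_min hT hτb, min_le_left _ _⟩
  have hmT : uIcc 0 m ⊆ uIcc 0 T ∧ uIcc m T ⊆ uIcc 0 T := by
    simp only [uIcc_of_le hm.1, uIcc_of_le hm.2, uIcc_of_le hT]
    exact ⟨Icc_subset_Icc_right hm.2, Icc_subset_Icc_left hm.1⟩
  have h_early : ∫ s in 0..m, β s * u s ≤ ∫ s in 0..m, (Φ * β s + β s * v s) := by
    refine intervalIntegral.integral_mono_on_of_le_Ioo hm.1 (hu.mono_set hmT.1)
      (((hβ 0 m).const_mul Φ).add (hv 0 m)) fun s hs ↦ ?_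
    have := mul_le_mul_of_nonneg_left
      ((hu_le s ⟨hs.1, hs.2.trans_le hm.2⟩).trans (max_le_add_of_nonneg hΦ (hv0 s))) (hβ0 s)
    linarith
  have h_late : ∫ s in m..T, β s * u s ≤ ∫ s in m..T, β s * v s := by
    refine intervalIntegral.integral_mono_on_of_le_Ioo hm.2 (hu.mono_set hmT.2) (hv m T)
      fun s hs ↦ mul_le_mul_of_nonneg_left (hu_late s ⟨?_, hs.2⟩) (hβ0 s)
    exact (min_lt_iff.1 hs.1).resolve_left hs.2.not_gt
  have hm_κ : ∫ s in 0..m, β s ≤ κ :=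
    (intervalIntegral.integral_mono_interval le_rfl hm.1 (min_le_right _ _)
      (Eventually.of_forall hβ0) (hβ 0 τb)).trans hκ
  calc ∫ s in 0..T, β s * u s
      = (∫ s in 0..m, β s * u s) + ∫ s in m..T, β s * u s :=
        (intervalIntegral.integral_add_adjacent_intervals (hu.mono_set hmT.1)
          (hu.mono_set hmT.2)).symm
    _ ≤ (∫ s in 0..m, (Φ * β s + β s * v s)) + ∫ s in m..T, β s * v s := by gcongr
    _ = Φ * (∫ s in 0..m, β s) + ∫ s in 0..T, β s * v s := by
        rw [intervalIntegral.integral_add ((hβ 0 m).const_mul Φ) (hv 0 m),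
          intervalIntegral.integral_const_mul, add_assoc,
          intervalIntegral.integral_add_adjacent_intervals (hv 0 m) (hv m T)]
    _ ≤ κ * Φ + ∫ s in 0..T, β s * v s := by nlinarith

theorem le_mul_exp_integral_of_delay {β w σ : ℝ → ℝ} {τb A κ Φ : ℝ}
    (hβ : ∀ x y, IntervalIntegrable β volume x y) (hβ0 : ∀ s, 0 ≤ β s) (hτb : 0 ≤ τb)
    (hκ : ∫ s in 0..τb, β s ≤ κ) (hσ : Continuous σ)
    (hσ_mem : ∀ s ≥ 0, σ s ∈ Icc (s - τb) s) (hw : ContinuousOn w (Ici (-τb)))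
    (hA : 0 ≤ A) (hΦ : 0 ≤ Φ) (hhist : ∀ r ∈ Icc (-τb) 0, w r ≤ Φ)
    (hint : ∀ T ≥ 0, w T ≤ A + ∫ s in 0..T, β s * w (σ s)) :
    ∀ t ≥ 0, w t ≤ (A + κ * Φ) * exp (∫ s in 0..t, β s) := by
  have hκ0 : 0 ≤ κ := (intervalIntegral.integral_nonneg hτb fun s _ ↦ hβ0 s).trans hκ
  intro t ht
  refine le_mul_exp_integral_of_barrier ht (hβ 0 t)
    (hw.mono fun s hs ↦ by simp only [mem_Ici]; linarith [hs.1]) fun T hT b hab hbelow ↦ ?_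
  have hb : 0 ≤ b := by nlinarith
  have hwσ : ContinuousOn (fun s ↦ w (σ s)) (uIcc 0 T) := by
    refine hw.comp hσ.continuousOn fun s hs ↦ ?_
    rw [uIcc_of_le hT.1] at hs
    have := (hσ_mem s hs.1).1; simp only [mem_Ici]; linarith [hs.1]
  have hdelayed : ∀ s ∈ Ioo 0 T, 0 < σ s → w (σ s) ≤ b * exp (∫ u in 0..s, β u) := by
    intro s hs hσs
    have hσs' := hσ_mem s hs.1.le
    refine (hbelow (σ s) ⟨hσs.le, hσs'.2.trans_lt hs.2⟩).le.trans ?_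
    gcongr
    exact intervalIntegral.integral_mono_interval le_rfl hσs.le hσs'.2
      (Eventually.of_forall hβ0) (hβ 0 s)
  refine (hint T hT.1).trans ?_
  rw [add_assoc]
  gcongr
  refine integral_mul_le_of_le_max hT.1 hτb hβ hβ0 hκ hΦ (fun s ↦ by positivity)
    ((hβ 0 T).mul_continuousOn hwσ) (fun x y ↦ (hβ x y).mul_continuousOn
      (continuous_const.mul (continuous_exp.comp
        (intervalIntegral.continuous_primitive hβ 0))).continuousOn) (fun s hs ↦ ?_)
    fun s hs ↦ hdelayed s ⟨hτb.trans_lt hs.1, hs.2⟩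
      (by linarith [(hσ_mem s (hτb.trans hs.1.le)).1, hs.1])
  rcases le_or_gt (σ s) 0 with hσs | hσs
  · exact le_max_of_le_left (hhist (σ s) ⟨by linarith [(hσ_mem s hs.1.le).1, hs.1], hσs⟩)
  · exact le_max_of_le_right (hdelayed s hs hσs)

theorem exp_mul_norm_duhamel_le {H : Type*} [NormedAddCommGroup H] [NormedSpace ℝ H]
    {S : ℝ → H →L[ℝ] H} {M ω T : ℝ} (hS : ∀ t ≥ (0:ℝ), ‖S t‖ ≤ M * exp (-ω * t)) (hT : 0 ≤ T)
    {k : ℝ → ℝ} (hk : IntervalIntegrable k volume 0 T) {g : ℝ → H} {G : ℝ → ℝ}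
    (hG : ContinuousOn G (Icc 0 T)) (hgG : ∀ s ∈ Icc 0 T, exp (ω * s) * ‖g s‖ ≤ G s) (x : H) :
    exp (ω * T) * ‖S T x + ∫ s in 0..T, k s • S (T - s) (g s)‖ ≤
      M * ‖x‖ + ∫ s in 0..T, M * |k s| * G s := by
  have hM : 0 ≤ M := by simpa using (norm_nonneg _).trans (hS 0 le_rfl)
  have hkG : IntervalIntegrable (fun s ↦ M * |k s| * G s) volume 0 T :=
    (hk.abs.const_mul M).mul_continuousOn (by rwa [uIcc_of_le hT])
  have hx : ‖S T x‖ ≤ M * exp (-ω * T) * ‖x‖ := (S T).le_of_opNorm_le (hS T hT) x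
  have hI : ‖∫ s in 0..T, k s • S (T - s) (g s)‖ ≤
      ∫ s in 0..T, exp (-ω * T) * (M * |k s| * G s) := by
    refine intervalIntegral.norm_integral_le_of_norm_le hT
      (ae_of_all _ fun s hs ↦ ?_) (hkG.const_mul _)
    have hexp : exp (-ω * (T - s)) = exp (-ω * T) * exp (ω * s) := by rw [← exp_add]; ring_nf
    calc ‖k s • S (T - s) (g s)‖ ≤ |k s| * (M * exp (-ω * (T - s)) * ‖g s‖) := by
          rw [norm_smul, norm_eq_abs]
          gcongr
          exact (S (T - s)).le_of_opNorm_le (hS _ (by linarith [hs.2])) _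
      _ = exp (-ω * T) * (M * |k s|) * (exp (ω * s) * ‖g s‖) := by rw [hexp]; ring
      _ ≤ exp (-ω * T) * (M * |k s|) * G s := by
          gcongr
          exact hgG s (Ioc_subset_Icc_self hs)
      _ = exp (-ω * T) * (M * |k s| * G s) := by ring
  have he : exp (ω * T) * exp (-ω * T) = 1 := by rw [← exp_add]; ring_nf; exact exp_zero
  calc exp (ω * T) * ‖S T x + ∫ s in 0..T, k s • S (T - s) (g s)‖
      ≤ exp (ω * T) *
          (M * exp (-ω * T) * ‖x‖ + ∫ s in 0..T, exp (-ω * T) * (M * |k s| * G s)) := by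
        gcongr
        exact (norm_add_le _ _).trans (add_le_add hx hI)
    _ = M * ‖x‖ + ∫ s in 0..T, M * |k s| * G s := by
        rw [intervalIntegral.integral_const_mul]
        linear_combination (M * ‖x‖ + ∫ s in 0..T, M * |k s| * G s) * he

theorem ContinuousLinearMap.exp_mul_norm_apply_le {E F : Type*} [NormedAddCommGroup E]
    [NormedSpace ℝ E] [NormedAddCommGroup F] [NormedSpace ℝ F] {ω δ s r : ℝ} (hω : 0 ≤ ω)
    (hr : s - δ ≤ r) (B : E →L[ℝ] F) (u : E) :
    exp (ω * s) * ‖B u‖ ≤ ‖B‖ * exp (ω * δ) * (exp (ω * r) * ‖u‖) := by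
  have hexp : exp (ω * s) ≤ exp (ω * δ) * exp (ω * r) := by
    rw [← exp_add]; gcongr; nlinarith
  calc exp (ω * s) * ‖B u‖ ≤ (exp (ω * δ) * exp (ω * r)) * (‖B‖ * ‖u‖) := by
        gcongr; exact B.le_opNorm u
    _ = ‖B‖ * exp (ω * δ) * (exp (ω * r) * ‖u‖) := by ring

theorem exp_mul_norm_le_of_delay_duhamel {H : Type*} [NormedAddCommGroup H] [NormedSpace ℝ H]
    {M ω τb : ℝ} (hω : 0 ≤ ω) {S : ℝ → H →L[ℝ] H}
    (hS : ∀ t ≥ (0:ℝ), ‖S t‖ ≤ M * exp (-ω * t)) {B : H →L[ℝ] H} {k : ℝ → ℝ}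
    (hk : ∀ a b : ℝ, IntervalIntegrable k volume a b) {τ : ℝ → ℝ} (hτ : Continuous τ)
    (hτrange : ∀ t ≥ (0:ℝ), τ t ∈ Icc (0:ℝ) τb) {f U : ℝ → H} (hU : ContinuousOn U (Ici (-τb)))
    (hduh : ∀ t ≥ (0:ℝ),
      U t = S t (f 0) + ∫ s in (0:ℝ)..t, k s • (S (t - s)) (B (U (s - τ s))))
    {T : ℝ} (hT : 0 ≤ T) :
    exp (ω * T) * ‖U T‖ ≤ M * ‖f 0‖ + ∫ s in 0..T,
      M * ‖B‖ * exp (ω * τb) * |k s| * (exp (ω * (s - τ s)) * ‖U (s - τ s)‖) := by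
  have hUσ : ContinuousOn (fun s ↦ U (s - τ s)) (Icc 0 T) :=
    hU.comp (continuous_id.sub hτ).continuousOn fun s hs ↦ by
      have := (hτrange s hs.1).2; simp only [mem_Ici]; linarith [hs.1]
  have hG : ContinuousOn
      (fun s ↦ ‖B‖ * exp (ω * τb) * (exp (ω * (s - τ s)) * ‖U (s - τ s)‖)) (Icc 0 T) := by
    refine continuousOn_const.mul (ContinuousOn.mul ?_ hUσ.norm)
    exact (continuous_exp.comp (continuous_const.mul (continuous_id.sub hτ))).continuousOn
  rw [hduh T hT]
  refine (exp_mul_norm_duhamel_le hS hT (hk 0 T) hG (fun s hs ↦ ?_) (f 0)).trans_eq ?_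
  · exact B.exp_mul_norm_apply_le hω (by linarith [(hτrange s hs.1).2]) _
  · congr 1
    exact intervalIntegral.integral_congr fun s _ ↦ by ring

theorem IsCompact.le_biSup_of_continuousOn {α : Type*} [TopologicalSpace α] {s : Set α}
    {f : α → ℝ} (hs : IsCompact s) (hf : ContinuousOn f s) {x : α} (hx : x ∈ s) :
    f x ≤ ⨆ y ∈ s, f y :=
  le_ciSup₂ (f := fun y (_ : y ∈ s) ↦ f y) ((hs.bddAbove_image hf).mono
    (iUnion_subset fun _ ↦ range_subset_iff.2 fun hy ↦ mem_image_of_mem f hy)) x hx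

theorem stmt_9_general {H : Type*} [NormedAddCommGroup H] [NormedSpace ℝ H]
    (M ω τb K γ ω' : ℝ) (hM : 1 ≤ M) (hω : 0 < ω) (hτb : 0 < τb) (hK : 0 < K)
    (S : ℝ → H →L[ℝ] H) (hS : ∀ t ≥ (0:ℝ), ‖S t‖ ≤ M * Real.exp (-ω * t))
    (B : H →L[ℝ] H)
    (k : ℝ → ℝ) (hk : ∀ a b : ℝ, IntervalIntegrable k volume a b)
    (hkK : ∀ t ≥ (0:ℝ), ∫ s in (t - τb)..t, |k s| ≤ K)
    (hlin : ∀ t ≥ (0:ℝ),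
      M * ‖B‖ * Real.exp (ω * τb) * ∫ s in (0:ℝ)..t, |k s| ≤ γ + ω' * t)
    (τ : ℝ → ℝ) (hτ : Continuous τ) (hτrange : ∀ t ≥ (0:ℝ), τ t ∈ Icc (0:ℝ) τb)
    (f : ℝ → H) (hf : ContinuousOn f (Icc (-τb) (0:ℝ)))
    (U : ℝ → H) (hU : ContinuousOn U (Ici (-τb)))
    (hhist : ∀ s ∈ Icc (-τb) (0:ℝ), U s = f s)
    (hduh : ∀ t ≥ (0:ℝ),
      U t = S t (f 0) + ∫ s in (0:ℝ)..t, k s • (S (t - s)) (B (U (s - τ s)))) :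
    ∀ t ≥ (0:ℝ),
      ‖U t‖ ≤ M * Real.exp γ *
        (‖f 0‖ + Real.exp (ω * τb) * K * ‖B‖ *
          ⨆ s ∈ Icc (-τb) (0:ℝ), Real.exp (ω * s) * ‖f s‖) *
        Real.exp (-(ω - ω') * t) := by
  set Φ := ⨆ s ∈ Icc (-τb) (0:ℝ), exp (ω * s) * ‖f s‖
  have hexp_cont : Continuous fun s ↦ exp (ω * s) := continuous_exp.comp (continuous_const_mul ω)
  have hΦ : ∀ r ∈ Icc (-τb) 0, exp (ω * r) * ‖f r‖ ≤ Φ := fun r ↦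
    isCompact_Icc.le_biSup_of_continuousOn (hexp_cont.continuousOn.mul hf.norm)
  have hΦ0 : 0 ≤ Φ :=
    (mul_nonneg (exp_pos _).le (norm_nonneg _)).trans (hΦ 0 ⟨by linarith, le_rfl⟩)
  have hM0 : 0 ≤ M := zero_le_one.trans hM
  have hw := le_mul_exp_integral_of_delay (β := fun s ↦ M * ‖B‖ * exp (ω * τb) * |k s|)
    (w := fun t ↦ exp (ω * t) * ‖U t‖) (σ := fun s ↦ s - τ s) (A := M * ‖f 0‖)
    (κ := M * ‖B‖ * exp (ω * τb) * K) (fun x y ↦ (hk x y).abs.const_mul _)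
    (fun s ↦ by positivity) hτb.le
    (by rw [intervalIntegral.integral_const_mul]; gcongr; simpa using hkK τb hτb.le)
    (continuous_id.sub hτ)
    (fun s hs ↦ ⟨by linarith [(hτrange s hs).2], by linarith [(hτrange s hs).1]⟩)
    (hexp_cont.continuousOn.mul hU.norm) (by positivity) hΦ0 (fun r hr ↦ hhist r hr ▸ hΦ r hr)
    (fun T hT ↦ exp_mul_norm_le_of_delay_duhamel hω.le hS hk hτ hτrange hU hduh hT)
  intro t ht
  have hΛ : ∫ s in 0..t, M * ‖B‖ * exp (ω * τb) * |k s| ≤ γ + ω' * t := by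
    rw [intervalIntegral.integral_const_mul]; exact hlin t ht
  calc ‖U t‖ = exp (-(ω * t)) * (exp (ω * t) * ‖U t‖) := by
        rw [← mul_assoc, ← exp_add, neg_add_cancel, exp_zero, one_mul]
    _ ≤ exp (-(ω * t)) * ((M * ‖f 0‖ + M * ‖B‖ * exp (ω * τb) * K * Φ) * exp (γ + ω' * t)) :=
        mul_le_mul_of_nonneg_left ((hw t ht).trans (by gcongr)) (exp_pos _).le
    _ = M * exp γ * (‖f 0‖ + exp (ω * τb) * K * ‖B‖ * Φ) * exp (-(ω - ω') * t) := by
        rw [show -(ω - ω') * t = -(ω * t) + ω' * t by ring, exp_add, exp_add]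
        ring

/-- Main exponential stability theorem for the linear delayed abstract problem. -/
theorem stmt_9 {H : Type*} [NormedAddCommGroup H] [NormedSpace ℝ H] [CompleteSpace H]
    (M ω τb K γ ω' : ℝ) (hM : 1 ≤ M) (hω : 0 < ω) (hτb : 0 < τb) (hK : 0 < K)
    (hγ : 0 ≤ γ) (hω'0 : 0 ≤ ω') (hω' : ω' < ω)
    (S : ℝ → H →L[ℝ] H) (hS : ∀ t ≥ (0:ℝ), ‖S t‖ ≤ M * Real.exp (-ω * t))
    (B : H →L[ℝ] H)
    (k : ℝ → ℝ) (hk : ∀ a b : ℝ, IntervalIntegrable k volume a b)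
    (hkK : ∀ t ≥ (0:ℝ), ∫ s in (t - τb)..t, |k s| ≤ K)
    (hlin : ∀ t ≥ (0:ℝ),
      M * ‖B‖ * Real.exp (ω * τb) * ∫ s in (0:ℝ)..t, |k s| ≤ γ + ω' * t)
    (τ : ℝ → ℝ) (hτ : Continuous τ) (hτrange : ∀ t ≥ (0:ℝ), τ t ∈ Icc (0:ℝ) τb)
    (f : ℝ → H) (hf : ContinuousOn f (Icc (-τb) (0:ℝ)))
    (U : ℝ → H) (hU : ContinuousOn U (Ici (-τb)))
    (hhist : ∀ s ∈ Icc (-τb) (0:ℝ), U s = f s)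
    (hduh : ∀ t ≥ (0:ℝ),
      U t = S t (f 0) + ∫ s in (0:ℝ)..t, k s • (S (t - s)) (B (U (s - τ s)))) :
    ∀ t ≥ (0:ℝ),
      ‖U t‖ ≤ M * Real.exp γ *
        (‖f 0‖ + Real.exp (ω * τb) * K * ‖B‖ *
          ⨆ s ∈ Icc (-τb) (0:ℝ), Real.exp (ω * s) * ‖f s‖) *
        Real.exp (-(ω - ω') * t) :=
  stmt_9_general M ω τb K γ ω' hM hω hτb hK S hS B k hk hkK hlin τ hτ hτrange f hf U hU hhist hduh
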